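/- Let X be a Banach space admitting an equivalent locally uniformly rotund norm and having Lindenstrauss property A. Then the set SE(X) of strongly exposing functionals on B_X is dense in X*. -/

import Mathlib

/-!
Renorm `X` by an equivalent LUR norm, obtaining a space `Y`, and map `X` into the ℓ₂-sum
`𝕜 ⊕₂ Y` by `T x = (f x, ε x)`. By property A some `S` close to `T` attains its norm at a point
`x₀`; if `w` is a norming functional of `S x₀`, then `w ∘ S` strongly exposes the unit ball at
`x₀`. Indeed, along a maximizing sequence `uₙ` we get `‖S uₙ + S x₀‖ → 2‖S x₀‖`, so the
`Y`-components of `S uₙ` converge, the ℓ₂-sum being locally uniformly rotund in its second factor;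
and these components control `uₙ` because `S` is close to `T`, whose `Y`-component is `ε • id`.
Finally `w ∘ S` is close to `β f` with `β = w (1, 0)` of norm at most `1`, while its own norm `‖S‖`
is at least about `‖f‖`; so a unimodular multiple of `w ∘ S` is close to `f`.
-/

open Filter Topology RCLike Bornology

/-- `f` strongly exposes the bounded set `C` at `x₀`. -/
def StronglyExposes {𝕜 X : Type} [RCLike 𝕜] [NormedAddCommGroup X] [NormedSpace 𝕜 X]
    (f : X →L[𝕜] 𝕜) (C : Set X) (x₀ : X) : Prop :=
  x₀ ∈ C ∧ (∀ x ∈ C, re (f x) ≤ re (f x₀)) ∧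
    ∀ u : ℕ → X, (∀ n, u n ∈ C) →
      Tendsto (fun n => re (f (u n))) atTop (𝓝 (re (f x₀))) →
      Tendsto u atTop (𝓝 x₀)

/-- `f` strongly exposes the closed unit ball at `x₀`. -/
def StronglyExposesBall {𝕜 X : Type} [RCLike 𝕜] [NormedAddCommGroup X] [NormedSpace 𝕜 X]
    (f : X →L[𝕜] 𝕜) (x₀ : X) : Prop :=
  ‖x₀‖ ≤ 1 ∧ re (f x₀) = ‖f‖ ∧
    ∀ u : ℕ → X, (∀ n, ‖u n‖ ≤ 1) →
      Tendsto (fun n => re (f (u n))) atTop (𝓝 ‖f‖) →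
      Tendsto u atTop (𝓝 x₀)

/-- `T` absolutely strongly exposes the closed unit ball at `x₀`. -/
def AbsStronglyExposes {𝕜 X Y : Type} [RCLike 𝕜] [NormedAddCommGroup X] [NormedSpace 𝕜 X]
    [NormedAddCommGroup Y] [NormedSpace 𝕜 Y] (T : X →L[𝕜] Y) (x₀ : X) : Prop :=
  ‖x₀‖ ≤ 1 ∧
    ∀ u : ℕ → X, (∀ n, ‖u n‖ ≤ 1) →
      Tendsto (fun n => ‖T (u n)‖) atTop (𝓝 ‖T‖) →
      ∃ θ : ℕ → 𝕜, (∀ n, ‖θ n‖ = 1) ∧ Tendsto (fun n => θ n • u n) atTop (𝓝 x₀)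

/-- `X` admits an equivalent locally uniformly rotund norm: a norm `N`, equivalent to the
given one, such that every point is an LUR point of `N`. -/
def HasEquivLURNorm (𝕜 X : Type) [RCLike 𝕜] [NormedAddCommGroup X] [NormedSpace 𝕜 X] : Prop :=
  ∃ (N : X → ℝ) (c C : ℝ), 0 < c ∧ 0 < C ∧
    (∀ x, c * ‖x‖ ≤ N x ∧ N x ≤ C * ‖x‖) ∧
    (∀ x y : X, N (x + y) ≤ N x + N y) ∧
    (∀ (a : 𝕜) (x : X), N (a • x) = ‖a‖ * N x) ∧
    (∀ (x₀ : X) (u : ℕ → X), (∀ n, N (u n) ≤ N x₀) →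
      Tendsto (fun n => N (u n + x₀)) atTop (𝓝 (2 * N x₀)) →
      Tendsto (fun n => N (u n - x₀)) atTop (𝓝 0))

def LocallyUniformlyRotund (E : Type*) [SeminormedAddCommGroup E] : Prop :=
  ∀ (y : E) (u : ℕ → E), (∀ n, ‖u n‖ ≤ ‖y‖) →
    Tendsto (fun n => ‖u n + y‖) atTop (𝓝 (2 * ‖y‖)) → Tendsto u atTop (𝓝 y)

section LocallyUniformlyRotund

variable {F : Type*} [NormedAddCommGroup F]

theorem LocallyUniformlyRotund.tendsto_of_tendsto_norm (𝕜 : Type*) [RCLike 𝕜] [NormedSpace 𝕜 F]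
    (hF : LocallyUniformlyRotund F) {y : F} {u : ℕ → F}
    (hu : Tendsto (fun n => ‖u n‖) atTop (𝓝 ‖y‖))
    (hadd : Tendsto (fun n => ‖u n + y‖) atTop (𝓝 (2 * ‖y‖))) : Tendsto u atTop (𝓝 y) := by
  -- shrink `u n` radially onto the ball of radius `‖y‖`; this moves it by `‖u n‖ - ‖y‖` at most
  set t : ℕ → ℝ := fun n => min 1 (‖y‖ / ‖u n‖)
  have ht₀ n : 0 ≤ t n := le_min zero_le_one (by positivity)
  have ht₁ n : t n ≤ 1 := min_le_left _ _
  have htu n : t n * ‖u n‖ = min ‖u n‖ ‖y‖ := by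
    rcases eq_or_ne ‖u n‖ 0 with h | h
    · simp [h]
    · rw [min_mul_of_nonneg _ _ (norm_nonneg _), one_mul, div_mul_cancel₀ _ h]
  set v : ℕ → F := fun n => (t n : 𝕜) • u n
  have hv n : ‖v n‖ = min ‖u n‖ ‖y‖ := by
    rw [norm_smul, norm_ofReal, abs_of_nonneg (ht₀ n), htu]
  have huv : Tendsto (fun n => u n - v n) atTop (𝓝 0) := by
    have h n : ‖u n - v n‖ = ‖u n‖ - min ‖u n‖ ‖y‖ := by
      have : u n - v n = ((1 - t n : ℝ) : 𝕜) • u n := by simp [v, sub_smul]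
      rw [this, norm_smul, norm_ofReal, abs_of_nonneg (sub_nonneg.2 (ht₁ n)), sub_mul,
        one_mul, htu]
    rw [tendsto_zero_iff_norm_tendsto_zero]
    simpa [h] using hu.sub (hu.min (tendsto_const_nhds (x := ‖y‖)))
  have hvadd : Tendsto (fun n => ‖v n + y‖) atTop (𝓝 (2 * ‖y‖)) := by
    refine tendsto_of_tendsto_of_tendsto_of_le_of_le
      (by simpa using hadd.sub huv.norm) tendsto_const_nhds (fun n => ?_) (fun n => ?_)
    · have : v n + y = (u n + y) - (u n - v n) := by abel
      simpa [this] using norm_sub_norm_le (u n + y) (u n - v n)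
    · linarith [norm_add_le (v n) y, hv n, min_le_right ‖u n‖ ‖y‖]
  have hvy := hF y v (fun n => (hv n).trans_le (min_le_right _ _)) hvadd
  simpa using hvy.add huv

variable {E : Type*} [SeminormedAddCommGroup E]

theorem LocallyUniformlyRotund.tendsto_snd_withLp (𝕜 : Type*) [RCLike 𝕜] [NormedSpace 𝕜 F]
    (hF : LocallyUniformlyRotund F) {w : WithLp 2 (E × F)} {v : ℕ → WithLp 2 (E × F)}
    (hv : ∀ n, ‖v n‖ ≤ ‖w‖) (hadd : Tendsto (fun n => ‖v n + w‖) atTop (𝓝 (2 * ‖w‖))) :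
    Tendsto (fun n => (v n).snd) atTop (𝓝 w.snd) := by
  set a : ℕ → ℝ := fun n => ‖(v n).fst‖
  set b : ℕ → ℝ := fun n => ‖(v n).snd‖
  have hw := WithLp.prod_norm_sq_eq_of_L2 w
  have hvw n : ‖v n + w‖ ^ 2 = ‖(v n).fst + w.fst‖ ^ 2 + ‖(v n).snd + w.snd‖ ^ 2 :=
    WithLp.prod_norm_sq_eq_of_L2 (v n + w)
  have hv_sq n : a n ^ 2 + b n ^ 2 ≤ ‖w‖ ^ 2 := by
    rw [← WithLp.prod_norm_sq_eq_of_L2]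
    exact pow_le_pow_left₀ (norm_nonneg _) (hv n) 2
  have hfst n : ‖(v n).fst + w.fst‖ ≤ a n + ‖w.fst‖ := norm_add_le _ _
  have hsnd n : ‖(v n).snd + w.snd‖ ≤ b n + ‖w.snd‖ := norm_add_le _ _
  -- parallelogram law in the Euclidean plane, for the vectors of norms of the components
  have hgap n : (a n - ‖w.fst‖) ^ 2 + (b n - ‖w.snd‖) ^ 2 ≤ 4 * ‖w‖ ^ 2 - ‖v n + w‖ ^ 2 := by
    have := norm_nonneg ((v n).fst + w.fst)
    have := norm_nonneg ((v n).snd + w.snd)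
    nlinarith [hv_sq n, hfst n, hsnd n, hvw n, hw]
  have hgap_lim : Tendsto (fun n => √(4 * ‖w‖ ^ 2 - ‖v n + w‖ ^ 2)) atTop (𝓝 0) := by
    have := ((hadd.pow 2).const_sub (4 * ‖w‖ ^ 2)).sqrt
    rwa [mul_pow, show (2 : ℝ) ^ 2 = 4 by norm_num, sub_self, Real.sqrt_zero] at this
  have ha : Tendsto a atTop (𝓝 ‖w.fst‖) :=
    tendsto_iff_dist_tendsto_zero.2 <| squeeze_zero (fun _ => dist_nonneg)
      (fun n => Real.abs_le_sqrt (by nlinarith [hgap n])) hgap_lim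
  have hb : Tendsto b atTop (𝓝 ‖w.snd‖) :=
    tendsto_iff_dist_tendsto_zero.2 <| squeeze_zero (fun _ => dist_nonneg)
      (fun n => Real.abs_le_sqrt (by nlinarith [hgap n])) hgap_lim
  have hsum_sq : Tendsto (fun n => ‖(v n).snd + w.snd‖ ^ 2) atTop (𝓝 ((2 * ‖w.snd‖) ^ 2)) := by
    refine tendsto_of_tendsto_of_tendsto_of_le_of_le
      (g := fun n => ‖v n + w‖ ^ 2 - (a n + ‖w.fst‖) ^ 2)
      (h := fun n => (b n + ‖w.snd‖) ^ 2) ?_ ?_ (fun n => ?_) (fun n => ?_)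
    · convert (hadd.pow 2).sub ((ha.add tendsto_const_nhds).pow 2) using 2
      linear_combination -4 * hw
    · convert (hb.add tendsto_const_nhds).pow 2 using 2
      ring
    · have := norm_nonneg ((v n).fst + w.fst)
      nlinarith [hfst n, hvw n]
    · exact pow_le_pow_left₀ (norm_nonneg _) (hsnd n) 2
  simpa [Real.sqrt_sq, norm_nonneg] using
    hF.tendsto_of_tendsto_norm 𝕜 hb (by simpa [Real.sqrt_sq, norm_nonneg] using hsum_sq.sqrt)

end LocallyUniformlyRotund

section Exposing

variable {𝕜 X : Type} [RCLike 𝕜] [NormedAddCommGroup X] [NormedSpace 𝕜 X]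
  {E F : Type*} [NormedAddCommGroup E] [NormedSpace 𝕜 E] [NormedAddCommGroup F] [NormedSpace 𝕜 F]

theorem tendsto_norm_add_of_tendsto_re {w : E →L[𝕜] 𝕜} (hw : ‖w‖ ≤ 1) {z₀ : E}
    (hwz : re (w z₀) = ‖z₀‖) {z : ℕ → E} (hz : ∀ n, ‖z n‖ ≤ ‖z₀‖)
    (hre : Tendsto (fun n => re (w (z n))) atTop (𝓝 ‖z₀‖)) :
    Tendsto (fun n => ‖z n + z₀‖) atTop (𝓝 (2 * ‖z₀‖)) := by
  refine tendsto_of_tendsto_of_tendsto_of_le_of_le (by simpa [two_mul] using hre.add_const ‖z₀‖)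
    tendsto_const_nhds (fun n => ?_) (fun n => ?_)
  · calc re (w (z n)) + ‖z₀‖ = re (w (z n + z₀)) := by rw [map_add, map_add, hwz]
      _ ≤ ‖w (z n + z₀)‖ := re_le_norm _
      _ ≤ 1 * ‖z n + z₀‖ := w.le_of_opNorm_le hw _
      _ = ‖z n + z₀‖ := one_mul _
  · linarith [norm_add_le (z n) z₀, hz n]

theorem StronglyExposesBall.smul {f : X →L[𝕜] 𝕜} {x₀ : X} (hf : StronglyExposesBall f x₀)
    {c : 𝕜} (hc : ‖c‖ = 1) : StronglyExposesBall (c • f) (c⁻¹ • x₀) := by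
  obtain ⟨hx₀, hfx₀, hexp⟩ := hf
  have hc₀ : c ≠ 0 := norm_ne_zero_iff.1 (by simp [hc])
  have hcf : ‖c • f‖ = ‖f‖ := by rw [norm_smul, hc, one_mul]
  refine ⟨by rwa [norm_smul, norm_inv, hc, inv_one, one_mul], ?_, fun u hu hre => ?_⟩
  · have : (c • f) (c⁻¹ • x₀) = f x₀ := by simp [inv_mul_cancel_left₀ hc₀]
    rwa [hcf, this]
  · have hcu : Tendsto (fun n => c • u n) atTop (𝓝 x₀) :=
      hexp _ (fun n => by rw [norm_smul, hc, one_mul]; exact hu n) (by simpa [hcf] using hre)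
    simpa [inv_smul_smul₀ hc₀] using hcu.const_smul c⁻¹

theorem stronglyExposesBall_comp_of_locallyUniformlyRotund (hF : LocallyUniformlyRotund F)
    {S : X →L[𝕜] WithLp 2 (E × F)} {x₀ : X} (hx₀ : ‖x₀‖ = 1) (hSx₀ : ‖S x₀‖ = ‖S‖) {K : ℝ}
    (hK : ∀ x, ‖x‖ ≤ K * ‖(S x).snd‖) {w : WithLp 2 (E × F) →L[𝕜] 𝕜} (hw : ‖w‖ ≤ 1)
    (hwS : re (w (S x₀)) = ‖S‖) : StronglyExposesBall (w.comp S) x₀ := by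
  have hnorm : ‖w.comp S‖ = ‖S‖ := by
    refine le_antisymm ((w.opNorm_comp_le S).trans (by nlinarith [norm_nonneg S])) ?_
    calc ‖S‖ = re ((w.comp S) x₀) := hwS.symm
      _ ≤ ‖(w.comp S) x₀‖ := re_le_norm _
      _ ≤ ‖w.comp S‖ * ‖x₀‖ := (w.comp S).le_opNorm x₀
      _ = ‖w.comp S‖ := by rw [hx₀, mul_one]
  refine ⟨hx₀.le, by simpa [hnorm] using hwS, fun u hu hre => ?_⟩
  have hSu n : ‖S (u n)‖ ≤ ‖S x₀‖ := by
    simpa [hSx₀] using S.le_of_opNorm_le_of_le le_rfl (hu n)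
  have hadd := tendsto_norm_add_of_tendsto_re hw (hSx₀ ▸ hwS) hSu
    (by simpa [hnorm, hSx₀] using hre)
  have hsnd := (hF.tendsto_snd_withLp 𝕜 hSu hadd).sub_const (S x₀).snd
  rw [tendsto_iff_norm_sub_tendsto_zero]
  refine squeeze_zero (fun _ => norm_nonneg _) (fun n => ?_)
    (by simpa using (hsnd.norm.const_mul K))
  calc ‖u n - x₀‖ ≤ K * ‖(S (u n - x₀)).snd‖ := hK _
    _ = K * ‖(S (u n)).snd - (S x₀).snd‖ := by rw [map_sub, WithLp.sub_snd]

end Exposing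

section Perturbation

open scoped ENNReal

variable {𝕜 X : Type*} [RCLike 𝕜] [NormedAddCommGroup X] [NormedSpace 𝕜 X]
  {E F : Type*} [NormedAddCommGroup E] [NormedSpace 𝕜 E] [NormedAddCommGroup F] [NormedSpace 𝕜 F]

noncomputable def ContinuousLinearMap.prodLp (p : ℝ≥0∞) (f : X →L[𝕜] E) (g : X →L[𝕜] F) :
    X →L[𝕜] WithLp p (E × F) :=
  (WithLp.prodContinuousLinearEquiv p 𝕜 E F).symm.toContinuousLinearMap.comp (f.prod g)

@[simp]
theorem ContinuousLinearMap.prodLp_apply (p : ℝ≥0∞) (f : X →L[𝕜] E) (g : X →L[𝕜] F) (x : X) :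
    f.prodLp p g x = WithLp.toLp p (f x, g x) :=
  rfl

variable {p : ℝ≥0∞} [Fact (1 ≤ p)]

theorem ContinuousLinearMap.norm_le_norm_prodLp (f : X →L[𝕜] E) (g : X →L[𝕜] F) :
    ‖f‖ ≤ ‖f.prodLp p g‖ :=
  f.opNorm_le_bound (norm_nonneg _) fun x =>
    (WithLp.norm_fst_le _ (f.prodLp p g x)).trans ((f.prodLp p g).le_opNorm x)

theorem norm_le_mul_norm_snd_of_norm_sub_le {S T : X →L[𝕜] WithLp p (E × F)} {K : ℝ}
    (hK : 0 ≤ K) (hT : ∀ x, ‖x‖ ≤ K * ‖(T x).snd‖) (hST : K * ‖S - T‖ ≤ 1 / 2) (x : X) :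
    ‖x‖ ≤ 2 * K * ‖(S x).snd‖ := by
  have hsnd : ‖(T x).snd‖ ≤ ‖(S x).snd‖ + ‖S - T‖ * ‖x‖ :=
    calc ‖(T x).snd‖ ≤ ‖(S x).snd‖ + ‖((S - T) x).snd‖ := by
          simpa [WithLp.sub_snd] using norm_le_insert (S x).snd (T x).snd
      _ ≤ ‖(S x).snd‖ + ‖S - T‖ * ‖x‖ :=
          add_le_add le_rfl ((WithLp.norm_snd_le _ _).trans ((S - T).le_opNorm x))
  nlinarith [hT x, mul_le_mul_of_nonneg_left hsnd hK, norm_nonneg x]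

theorem norm_comp_sub_smul_le {w : WithLp p (𝕜 × F) →L[𝕜] 𝕜} (hw : ‖w‖ ≤ 1)
    (S : X →L[𝕜] WithLp p (𝕜 × F)) (f : X →L[𝕜] 𝕜) (g : X →L[𝕜] F) :
    ‖w.comp S - w (WithLp.toLp p (1, 0)) • f‖ ≤ ‖S - f.prodLp p g‖ + ‖g‖ := by
  refine ContinuousLinearMap.opNorm_le_bound _ (by positivity) fun x => ?_
  have hT : f.prodLp p g x = f x • WithLp.toLp p (1, 0) + WithLp.toLp p (0, g x) := by
    rw [← WithLp.toLp_smul, ← WithLp.toLp_add]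
    simp
  have hdecomp : (w.comp S - w (WithLp.toLp p (1, 0)) • f) x
      = w ((S - f.prodLp p g) x) + w (WithLp.toLp p (0, g x)) := by
    simp only [sub_apply, smul_apply, ContinuousLinearMap.comp_apply, map_sub, map_add, map_smul,
      hT, smul_eq_mul]
    ring
  calc ‖(w.comp S - w (WithLp.toLp p (1, 0)) • f) x‖
      ≤ ‖(S - f.prodLp p g) x‖ + ‖WithLp.toLp p ((0 : 𝕜), g x)‖ := by
        rw [hdecomp]
        exact (norm_add_le _ _).trans (add_le_add
          ((w.le_of_opNorm_le hw _).trans_eq (one_mul _))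
          ((w.le_of_opNorm_le hw _).trans_eq (one_mul _)))
    _ ≤ ‖S - f.prodLp p g‖ * ‖x‖ + ‖g‖ * ‖x‖ := by
        rw [WithLp.norm_toLp_snd]
        exact add_le_add ((S - f.prodLp p g).le_opNorm x) (g.le_opNorm x)
    _ = (‖S - f.prodLp p g‖ + ‖g‖) * ‖x‖ := by ring

end Perturbation

theorem exists_norm_eq_one_norm_smul_sub_le {𝕜 E : Type*} [RCLike 𝕜] [NormedAddCommGroup E]
    [NormedSpace 𝕜 E] (g f : E) {β : 𝕜} (hβ : ‖β‖ ≤ 1) :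
    ∃ c : 𝕜, ‖c‖ = 1 ∧ ‖c • g - f‖ ≤ 2 * ‖g - β • f‖ + (‖f‖ - ‖g‖) := by
  obtain ⟨c, hc, hcβ⟩ := exists_norm_eq_mul_self β
  refine ⟨c, hc, ?_⟩
  have hdecomp : c • g - f = c • (g - β • f) - ((1 - ‖β‖ : ℝ) : 𝕜) • f := by
    rw [smul_sub, smul_smul, ← hcβ, ofReal_sub, ofReal_one, sub_smul, one_smul]
    abel
  have hg : ‖g‖ ≤ ‖g - β • f‖ + ‖β‖ * ‖f‖ := by
    simpa [norm_smul] using norm_le_norm_sub_add g (β • f)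
  calc ‖c • g - f‖ ≤ ‖g - β • f‖ + (1 - ‖β‖) * ‖f‖ := by
        rw [hdecomp]
        refine (norm_sub_le _ _).trans_eq ?_
        rw [norm_smul, norm_smul, hc, one_mul, norm_ofReal, abs_of_nonneg (by linarith)]
    _ ≤ 2 * ‖g - β • f‖ + (‖f‖ - ‖g‖) := by linarith

section Density

variable {𝕜 X Y : Type} [RCLike 𝕜] [NormedAddCommGroup X] [NormedSpace 𝕜 X]
  [NormedAddCommGroup Y] [NormedSpace 𝕜 Y] {j : X →L[𝕜] Y} {K : NNReal}

theorem exists_stronglyExposesBall_norm_sub_le (hY : LocallyUniformlyRotund Y)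
    (hj : AntilipschitzWith K j) (f : X →L[𝕜] 𝕜) {ε η : ℝ} (hε : 0 < ε) (hη : 2 * K * η ≤ ε)
    {S : X →L[𝕜] WithLp 2 (𝕜 × Y)} (hST : ‖S - f.prodLp 2 ((ε : 𝕜) • j)‖ ≤ η) {x₀ : X}
    (hx₀ : ‖x₀‖ = 1) (hSx₀ : ‖S x₀‖ = ‖S‖) :
    ∃ F z₀, StronglyExposesBall F z₀ ∧ ‖F - f‖ ≤ 3 * η + 2 * ε * ‖j‖ := by
  set T := f.prodLp 2 ((ε : 𝕜) • j)
  have hT x : ‖x‖ ≤ K / ε * ‖(T x).snd‖ := by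
    have hjx : ‖x‖ ≤ K * ‖j x‖ := by simpa using hj.le_mul_norm_sub x 0
    simp only [T, ContinuousLinearMap.prodLp_apply, WithLp.toLp_snd, smul_apply, norm_smul,
      norm_ofReal, abs_of_pos hε]
    rwa [div_mul_eq_mul_div, mul_div_assoc, mul_div_cancel_left₀ _ hε.ne']
  have hS := norm_le_mul_norm_snd_of_norm_sub_le (by positivity) hT (S := S) (by
    rw [div_mul_eq_mul_div, div_le_iff₀ hε]
    nlinarith [K.coe_nonneg])
  obtain ⟨w, hw, hwS⟩ := exists_dual_vector'' 𝕜 (S x₀)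
  have hexp := stronglyExposesBall_comp_of_locallyUniformlyRotund hY hx₀ hSx₀ hS hw
    (by rw [hwS, ofReal_re, hSx₀])
  have hβ : ‖w (WithLp.toLp 2 (1, 0))‖ ≤ 1 := by
    simpa using w.le_of_opNorm_le hw (WithLp.toLp 2 ((1 : 𝕜), (0 : Y)))
  obtain ⟨c, hc, hcf⟩ := exists_norm_eq_one_norm_smul_sub_le (w.comp S) f hβ
  refine ⟨c • w.comp S, _, hexp.smul hc, ?_⟩
  have hwS_norm : ‖w.comp S‖ = ‖S‖ := by
    rw [← hexp.2.1, ContinuousLinearMap.comp_apply, hwS, ofReal_re, hSx₀]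
  have hclose := norm_comp_sub_smul_le hw S f ((ε : 𝕜) • j)
  have hεj : ‖(ε : 𝕜) • j‖ = ε * ‖j‖ := by rw [norm_smul, norm_ofReal, abs_of_pos hε]
  have hfT : ‖f‖ ≤ ‖T‖ := f.norm_le_norm_prodLp _
  have hTS : ‖T‖ - ‖S‖ ≤ ‖S - T‖ := by simpa [norm_sub_rev] using norm_sub_norm_le T S
  linarith

theorem dense_setOf_stronglyExposesBall (hY : LocallyUniformlyRotund Y)
    (hj : AntilipschitzWith K j)
    (hA : Dense {T : X →L[𝕜] WithLp 2 (𝕜 × Y) | ∃ x, ‖x‖ = 1 ∧ ‖T x‖ = ‖T‖}) :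
    Dense {f : X →L[𝕜] 𝕜 | ∃ x₀, StronglyExposesBall f x₀} := by
  refine Metric.dense_iff.2 fun f r hr => ?_
  set ε := r / (4 * (‖j‖ + 1))
  have hε : 0 < ε := by positivity
  have hεj : ε * ‖j‖ ≤ r / 4 := by
    rw [div_mul_eq_mul_div, div_le_div_iff₀ (by positivity) (by norm_num)]
    nlinarith [norm_nonneg j]
  set η := min (r / 8) (ε / (2 * (K + 1)))
  have hη : 0 < η := lt_min (by positivity) (by positivity)
  have hηK : 2 * K * η ≤ ε := by
    have h := min_le_right (r / 8) (ε / (2 * (K + 1)))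
    rw [le_div_iff₀ (by positivity)] at h
    nlinarith [K.coe_nonneg]
  obtain ⟨S, hST, x₀, hx₀, hSx₀⟩ := Metric.dense_iff.1 hA (f.prodLp 2 ((ε : 𝕜) • j)) η hη
  rw [Metric.mem_ball, dist_eq_norm] at hST
  obtain ⟨F, z₀, hF, hFf⟩ :=
    exists_stronglyExposesBall_norm_sub_le hY hj f hε hηK hST.le hx₀ hSx₀
  refine ⟨F, ?_, z₀, hF⟩
  rw [Metric.mem_ball, dist_eq_norm]
  linarith [min_le_left (r / 8) (ε / (2 * (K + 1)))]

end Density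

structure EquivalentNorm (𝕜 X : Type) [RCLike 𝕜] [NormedAddCommGroup X] [NormedSpace 𝕜 X] where
  toFun : X → ℝ
  c : ℝ
  C : ℝ
  c_pos : 0 < c
  mul_norm_le : ∀ x, c * ‖x‖ ≤ toFun x
  le_mul_norm : ∀ x, toFun x ≤ C * ‖x‖
  add_le : ∀ x y, toFun (x + y) ≤ toFun x + toFun y
  smul : ∀ (a : 𝕜) (x : X), toFun (a • x) = ‖a‖ * toFun x

namespace EquivalentNorm

variable {𝕜 X : Type} [RCLike 𝕜] [NormedAddCommGroup X] [NormedSpace 𝕜 X] (N : EquivalentNorm 𝕜 X)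

def Space (_N : EquivalentNorm 𝕜 X) : Type := X

instance : AddCommGroup N.Space := inferInstanceAs (AddCommGroup X)

instance : Module 𝕜 N.Space := inferInstanceAs (Module 𝕜 X)

instance : Norm N.Space := ⟨N.toFun⟩

theorem nonneg (x : X) : 0 ≤ N.toFun x :=
  (mul_nonneg N.c_pos.le (norm_nonneg x)).trans (N.mul_norm_le x)

theorem normedSpaceCore : NormedSpace.Core 𝕜 N.Space where
  norm_nonneg := N.nonneg
  norm_smul := N.smul
  norm_triangle := N.add_le
  norm_eq_zero_iff x := by
    refine ⟨fun h => ?_, fun h => h ▸ (by simpa using N.smul 0 0 : N.toFun 0 = 0)⟩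
    have hx := (N.mul_norm_le x).trans_eq h
    exact norm_eq_zero.1 (le_antisymm (nonpos_of_mul_nonpos_right hx N.c_pos) (norm_nonneg _))

noncomputable instance : NormedAddCommGroup N.Space := .ofCore N.normedSpaceCore

noncomputable instance : NormedSpace 𝕜 N.Space := .ofCore N.normedSpaceCore

def toSpaceₗ : X ≃ₗ[𝕜] N.Space :=
  LinearEquiv.refl 𝕜 X

noncomputable def toSpace : X ≃L[𝕜] N.Space :=
  N.toSpaceₗ.toContinuousLinearEquivOfBounds N.C N.c⁻¹
    N.le_mul_norm fun x => (le_inv_mul_iff₀ N.c_pos).2 (N.mul_norm_le x)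

@[simp]
theorem norm_toSpace (x : X) : ‖N.toSpace x‖ = N.toFun x :=
  rfl

instance [CompleteSpace X] : CompleteSpace N.Space :=
  (completeSpace_congr (e := N.toSpace.toEquiv) N.toSpace.isUniformEmbedding).1 ‹_›

theorem antilipschitzWith_toSpace :
    AntilipschitzWith (Real.toNNReal N.c⁻¹) (N.toSpace : X →L[𝕜] N.Space) :=
  ContinuousLinearMap.antilipschitz_of_bound (N.toSpace : X →L[𝕜] N.Space) fun x => by
    rw [Real.coe_toNNReal _ (inv_nonneg.2 N.c_pos.le)]
    exact (le_inv_mul_iff₀ N.c_pos).2 ((N.mul_norm_le x).trans_eq (N.norm_toSpace x).symm)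

end EquivalentNorm

theorem HasEquivLURNorm.exists_equivalentNorm {𝕜 X : Type} [RCLike 𝕜] [NormedAddCommGroup X]
    [NormedSpace 𝕜 X] (h : HasEquivLURNorm 𝕜 X) :
    ∃ N : EquivalentNorm 𝕜 X, LocallyUniformlyRotund N.Space := by
  obtain ⟨N, c, C, hc, -, hNC, hadd, hsmul, hlur⟩ := h
  exact ⟨⟨N, c, C, hc, fun x => (hNC x).1, fun x => (hNC x).2, hadd, hsmul⟩, fun y u hu hlim =>
    tendsto_iff_norm_sub_tendsto_zero.2 (hlur y u hu hlim)⟩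

theorem stmt14 {𝕜 X : Type} [RCLike 𝕜]
    [NormedAddCommGroup X] [NormedSpace 𝕜 X] [CompleteSpace X]
    (hLUR : HasEquivLURNorm 𝕜 X)
    (hA : ∀ (W : Type) [NormedAddCommGroup W] [NormedSpace 𝕜 W] [CompleteSpace W],
      Dense {T : X →L[𝕜] W | ∃ x, ‖x‖ = 1 ∧ ‖T x‖ = ‖T‖}) :
    Dense {f : X →L[𝕜] 𝕜 | ∃ x₀, StronglyExposesBall f x₀} := by
  obtain ⟨N, hN⟩ := hLUR.exists_equivalentNorm
  exact dense_setOf_stronglyExposesBall hN N.antilipschitzWith_toSpace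
    (hA (WithLp 2 (𝕜 × N.Space)))
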